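/- For 0 < p < 1 and fixed r ≥ 1, the r-th factorial moment of the source degree D_n in the Bernoulli model equals E(D_n^{falling r}) = r! Σ_{j=0}^{r-1} C(r-1,j) (-1)^{r-1-j} C(n + p(j+1) - 1, n-1), and as n → ∞ it is asymptotic to r! n^{rp} / Γ(rp + 1). -/

import Mathlib

open Real Filter Topology Set

/-- Generalized binomial coefficient `C(x,k)` with real upper argument. -/
noncomputable def gchoose (x : ℝ) (k : ℕ) : ℝ :=
  (∏ i ∈ Finset.range k, (x - i)) / (Nat.factorial k)

/-- The probabilities `P{D_n = m}` in the Bernoulli model. -/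
noncomputable def PD (p : ℝ) (n m : ℕ) : ℝ :=
  ∑ j ∈ Finset.range m,
    (Nat.choose (m - 1) j : ℝ) * (-1 : ℝ) ^ (n + j - 1) * gchoose (p * (j + 1) - 1) (n - 1)

lemma gchoose_zero (x : ℝ) : gchoose x 0 = 1 := by simp [gchoose]

lemma gchoose_succ (x : ℝ) (k : ℕ) :
    gchoose x (k+1) * (k+1) = gchoose x k * (x - k) := by
  have h1 : ((k.factorial : ℝ)) ≠ 0 := Nat.cast_ne_zero.mpr (Nat.factorial_ne_zero k)
  have h2 : ((k:ℝ)+1) ≠ 0 := by positivity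
  simp only [gchoose, Finset.prod_range_succ, Nat.factorial_succ]
  push_cast
  field_simp

lemma gchoose_succ' (x : ℝ) (k : ℕ) :
    gchoose (x+1) (k+1) * (k+1) = gchoose x k * (x + 1) := by
  have h1 : ((k.factorial : ℝ)) ≠ 0 := Nat.cast_ne_zero.mpr (Nat.factorial_ne_zero k)
  have h2 : ((k:ℝ)+1) ≠ 0 := by positivity
  have h3 : ∏ i ∈ Finset.range (k+1), (x + 1 - (i:ℕ)) = (∏ i ∈ Finset.range k, (x - i)) * (x+1) := by
    rw [Finset.prod_range_succ']
    congr 1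
    · apply Finset.prod_congr rfl; intro i _; push_cast; ring
    · norm_num
  simp only [gchoose, h3, Nat.factorial_succ]
  push_cast
  field_simp

lemma nat_id (a b : ℕ) : a.choose b * (a - b) = a * ((a-1).choose b) := by
  cases a with
  | zero => simp
  | succ t =>
    rw [← Nat.choose_succ_right_eq, Nat.succ_sub_one, Nat.add_one_mul_choose_eq]

lemma real_id (a b : ℕ) : ((a:ℝ) - b) * a.choose b = a * ((a-1).choose b) := by
  rcases le_or_gt b a with h | h
  · have h0 := nat_id a b
    have h1 : ((a - b : ℕ) : ℝ) = (a:ℝ) - b := by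
      push_cast [h]; ring
    calc ((a:ℝ) - b) * a.choose b = ((a.choose b * (a - b) : ℕ) : ℝ) := by
          push_cast [h1]; ring
      _ = ((a * ((a-1).choose b) : ℕ) : ℝ) := by rw [h0]
      _ = (a:ℝ) * ((a-1).choose b) := by push_cast; ring
  · have h2 : a - 1 < b := by omega
    simp [Nat.choose_eq_zero_of_lt h, Nat.choose_eq_zero_of_lt h2]

lemma real_choose_succ_right (a b : ℕ) :
    ((a:ℝ) - b) * a.choose b = ((b:ℝ)+1) * a.choose (b+1) := by
  rcases le_or_gt b a with h | h
  · have h0 := Nat.choose_succ_right_eq a b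
    have h1 : ((a - b : ℕ) : ℝ) = (a:ℝ) - b := by push_cast [h]; ring
    calc ((a:ℝ) - b) * a.choose b = ((a.choose b * (a - b) : ℕ) : ℝ) := by
          push_cast [h1]; ring
      _ = ((a.choose (b+1) * (b+1) : ℕ) : ℝ) := by rw [h0]
      _ = ((b:ℝ)+1) * a.choose (b+1) := by push_cast; ring
  · have h2 : a < b + 1 := by omega
    simp [Nat.choose_eq_zero_of_lt h, Nat.choose_eq_zero_of_lt h2]

lemma PD_eq (p : ℝ) (k m : ℕ) :
    PD p (k+1) m = ∑ j ∈ Finset.range m,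
      (Nat.choose (m-1) j : ℝ) * (-1:ℝ)^(k+j) * gchoose (p*(j+1)-1) k := by
  unfold PD
  apply Finset.sum_congr rfl
  intro j _
  have h1 : k + 1 + j - 1 = k + j := by omega
  have h2 : k + 1 - 1 = k := by omega
  rw [h1, h2]

lemma PD_zero (p : ℝ) (n : ℕ) : PD p n 0 = 0 := by simp [PD]

lemma PD_rec (p : ℝ) (k m : ℕ) :
    ((k:ℝ)+1) * PD p (k+2) m
      = (((k:ℝ)+1) - p*m) * PD p (k+1) m + p*((m:ℝ)-1) * PD p (k+1) (m-1) := by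
  cases m with
  | zero => simp [PD]
  | succ m' =>
    have e1 : PD p (k+2) (m'+1) = ∑ j ∈ Finset.range (m'+1),
        (Nat.choose m' j : ℝ) * (-1:ℝ)^(k+1+j) * gchoose (p*(j+1)-1) (k+1) := by
      have := PD_eq p (k+1) (m'+1)
      simpa using this
    have e2 : PD p (k+1) (m'+1) = ∑ j ∈ Finset.range (m'+1),
        (Nat.choose m' j : ℝ) * (-1:ℝ)^(k+j) * gchoose (p*(j+1)-1) k := by
      simpa using PD_eq p k (m'+1)
    have e3 : PD p (k+1) (m'+1-1) = ∑ j ∈ Finset.range m',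
        (Nat.choose (m'-1) j : ℝ) * (-1:ℝ)^(k+j) * gchoose (p*(j+1)-1) k := by
      simpa using PD_eq p k m'
    rw [e1, e2, e3]
    -- extend third sum to range (m'+1)
    have htop : p*(((m'+1:ℕ):ℝ)-1) * ((Nat.choose (m'-1) m' : ℝ) * (-1:ℝ)^(k+m') * gchoose (p*(m'+1)-1) k) = 0 := by
      cases m' with
      | zero => push_cast; ring
      | succ t =>
        have : (t+1-1).choose (t+1) = 0 := Nat.choose_eq_zero_of_lt (by omega)
        rw [this]; push_cast; ring
    have e4 : p*(((m'+1:ℕ):ℝ)-1) * ∑ j ∈ Finset.range m',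
        (Nat.choose (m'-1) j : ℝ) * (-1:ℝ)^(k+j) * gchoose (p*(j+1)-1) k
        = ∑ j ∈ Finset.range (m'+1),
          p*(((m'+1:ℕ):ℝ)-1) * ((Nat.choose (m'-1) j : ℝ) * (-1:ℝ)^(k+j) * gchoose (p*(j+1)-1) k) := by
      rw [Finset.sum_range_succ, htop, add_zero, Finset.mul_sum]
    rw [e4, Finset.mul_sum, Finset.mul_sum, ← Finset.sum_add_distrib]
    apply Finset.sum_congr rfl
    intro j hj
    have hG := gchoose_succ (p*(j+1)-1) k
    have hkey := real_id m' j
    have hsgn : (-1:ℝ)^(k+1+j) = -(-1:ℝ)^(k+j) := by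
      rw [show k+1+j = (k+j)+1 by omega, pow_succ]; ring
    rw [hsgn]
    push_cast
    linear_combination (-((Nat.choose m' j : ℝ) * (-1:ℝ)^(k+j))) * hG
      + ((-1:ℝ)^(k+j) * gchoose (p*(j+1)-1) k * p) * hkey

lemma trinom (n j k : ℕ) (hk : k ≤ j) (hj : j ≤ n) :
    (n.choose j : ℝ) * j.choose k = (n.choose k : ℝ) * (n-k).choose (j-k) := by
  rw [Nat.cast_choose ℝ hj, Nat.cast_choose ℝ hk, Nat.cast_choose ℝ (le_trans hk hj),
    Nat.cast_choose ℝ (by omega : j - k ≤ n - k)]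
  have h1 : n - k - (j - k) = n - j := by omega
  rw [h1]
  have f1 : ((j.factorial : ℝ)) ≠ 0 := Nat.cast_ne_zero.mpr (Nat.factorial_ne_zero _)
  have f2 : ((k.factorial : ℝ)) ≠ 0 := Nat.cast_ne_zero.mpr (Nat.factorial_ne_zero _)
  have f3 : (((n-j).factorial : ℝ)) ≠ 0 := Nat.cast_ne_zero.mpr (Nat.factorial_ne_zero _)
  have f4 : (((j-k).factorial : ℝ)) ≠ 0 := Nat.cast_ne_zero.mpr (Nat.factorial_ne_zero _)
  have f5 : (((n-k).factorial : ℝ)) ≠ 0 := Nat.cast_ne_zero.mpr (Nat.factorial_ne_zero _)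
  field_simp

lemma alt_sum (n k : ℕ) (hk : k < n) :
    ∑ j ∈ Finset.range (n+1), (-1:ℝ)^j * (n.choose j) * (j.choose k) = 0 := by
  have hsplit : ∑ j ∈ Finset.range (n+1), (-1:ℝ)^j * (n.choose j) * (j.choose k)
      = ∑ j ∈ Finset.Ico k (n+1), (-1:ℝ)^j * (n.choose j) * (j.choose k) := by
    rw [Finset.range_eq_Ico, ← Finset.sum_Ico_consecutive _ (Nat.zero_le k) (by omega)]
    have : ∑ j ∈ Finset.Ico 0 k, (-1:ℝ)^j * (n.choose j) * (j.choose k) = 0 := by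
      apply Finset.sum_eq_zero
      intro j hj
      simp only [Finset.mem_Ico] at hj
      rw [Nat.choose_eq_zero_of_lt hj.2]
      push_cast; ring
    rw [this, zero_add]
  rw [hsplit, Finset.sum_Ico_eq_sum_range]
  have hrw : ∀ i ∈ Finset.range (n+1-k), (-1:ℝ)^(k+i) * (n.choose (k+i)) * ((k+i).choose k)
      = ((-1:ℝ)^k * n.choose k) * ((-1:ℝ)^i * ((n-k).choose i)) := by
    intro i hi
    simp only [Finset.mem_range] at hi
    have h1 : (n.choose (k+i) : ℝ) * ((k+i).choose k) = (n.choose k : ℝ) * (n-k).choose i := by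
      have := trinom n (k+i) k (by omega) (by omega)
      simpa using this
    rw [pow_add]
    calc (-1:ℝ)^k * (-1:ℝ)^i * (n.choose (k+i)) * ((k+i).choose k)
        = (-1:ℝ)^k * (-1:ℝ)^i * ((n.choose (k+i) : ℝ) * ((k+i).choose k)) := by ring
      _ = (-1:ℝ)^k * (-1:ℝ)^i * ((n.choose k : ℝ) * (n-k).choose i) := by rw [h1]
      _ = ((-1:ℝ)^k * n.choose k) * ((-1:ℝ)^i * ((n-k).choose i)) := by ring
  rw [Finset.sum_congr rfl hrw, ← Finset.mul_sum]
  have hz : ∑ i ∈ Finset.range (n+1-k), (-1:ℝ)^i * ((n-k).choose i) = 0 := by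
    have h0 : n + 1 - k = (n - k) + 1 := by omega
    have hne : n - k ≠ 0 := by omega
    have := Int.alternating_sum_range_choose_of_ne hne
    rw [h0]
    have hcast : ((∑ i ∈ Finset.range (n-k+1), ((-1)^i * ((n-k).choose i) : ℤ) : ℤ) : ℝ)
        = ∑ i ∈ Finset.range (n-k+1), (-1:ℝ)^i * ((n-k).choose i) := by
      push_cast; rfl
    rw [← hcast, this]
    norm_num
  rw [hz, mul_zero]

lemma span (s : ℕ) (a : ℝ) (b : ℕ → ℝ) :
    ∃ c : ℕ → ℝ, (∀ k, s < k → c k = 0) ∧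
      ∀ j : ℕ, (∏ i ∈ Finset.range s, (a*(j:ℝ) + b i))
        = ∑ k ∈ Finset.range (s+1), c k * ((j.choose k : ℕ) : ℝ) := by
  induction s with
  | zero =>
    refine ⟨fun k => if k = 0 then 1 else 0, ?_, ?_⟩
    · intro k hk; have hk' : k ≠ 0 := by omega
      simp [hk']
    · intro j; simp
  | succ s ih =>
    obtain ⟨c, hc0, hc⟩ := ih
    refine ⟨fun k => a*(k:ℝ)*c (k-1) + (a*(k:ℝ) + b s)*c k, ?_, ?_⟩
    · intro k hk
      simp only
      rw [hc0 (k-1) (by omega), hc0 k (by omega)]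
      ring
    · intro j
      rw [Finset.prod_range_succ, hc j, Finset.sum_mul]
      simp only
      have hL : ∑ k ∈ Finset.range (s+2),
          (a*(k:ℝ)*c (k-1) + (a*(k:ℝ) + b s)*c k) * ((j.choose k : ℕ) : ℝ)
          = ∑ k ∈ Finset.range (s+2), a*(k:ℝ)*c (k-1) * (j.choose k)
            + ∑ k ∈ Finset.range (s+2), (a*(k:ℝ) + b s)*c k * (j.choose k) := by
        rw [← Finset.sum_add_distrib]
        apply Finset.sum_congr rfl; intro k _; ring
      rw [hL]
      have h1 : ∑ k ∈ Finset.range (s+2), a*(k:ℝ)*c (k-1) * (j.choose k)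
          = ∑ k ∈ Finset.range (s+1), a*((k:ℝ)+1)*c k * (j.choose (k+1)) := by
        rw [Finset.sum_range_succ']
        simp only [Nat.cast_zero, mul_zero, zero_mul, add_zero, Nat.add_sub_cancel,
          Nat.cast_add, Nat.cast_one]
      have h2 : ∑ k ∈ Finset.range (s+2), (a*(k:ℝ) + b s)*c k * (j.choose k)
          = ∑ k ∈ Finset.range (s+1), (a*(k:ℝ) + b s)*c k * (j.choose k) := by
        rw [Finset.sum_range_succ, hc0 (s+1) (by omega)]
        simp
      rw [h1, h2, ← Finset.sum_add_distrib]
      apply Finset.sum_congr rfl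
      intro k _
      have hkey := real_choose_succ_right j k
      linear_combination (c k * a) * hkey

lemma PD_vanish (p : ℝ) (t : ℕ) : PD p (t+1) (t+2) = 0 := by
  obtain ⟨c, hc0, hc⟩ := span t p (fun i => p - 1 - (i:ℝ))
  have hg : ∀ j : ℕ, gchoose (p*(j+1)-1) t
      = ∑ k ∈ Finset.range (t+1), (c k / (t.factorial : ℝ)) * ((j.choose k : ℕ) : ℝ) := by
    intro j
    have h1 : ∏ i ∈ Finset.range t, (p*(j+1)-1 - (i:ℕ)) = ∏ i ∈ Finset.range t, (p*(j:ℝ) + (p - 1 - (i:ℝ))) := by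
      apply Finset.prod_congr rfl; intro i _; ring
    rw [gchoose, h1, hc j, Finset.sum_div]
    apply Finset.sum_congr rfl; intro k _; ring
  rw [PD_eq]
  have h2 : ∀ j ∈ Finset.range (t+2),
      ((t+2-1).choose j : ℝ) * (-1:ℝ)^(t+j) * gchoose (p*(j+1)-1) t
      = ∑ k ∈ Finset.range (t+1),
          ((-1:ℝ)^t * (c k / (t.factorial : ℝ))) * ((-1:ℝ)^j * ((t+1).choose j) * (j.choose k)) := by
    intro j _
    rw [hg j, Finset.mul_sum]
    apply Finset.sum_congr rfl
    intro k _
    have : t+2-1 = t+1 := by omega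
    rw [this, pow_add]
    ring
  rw [Finset.sum_congr rfl h2, Finset.sum_comm]
  apply Finset.sum_eq_zero
  intro k hk
  simp only [Finset.mem_range] at hk
  rw [← Finset.mul_sum]
  have := alt_sum (t+1) k (by omega)
  rw [this, mul_zero]

noncomputable def Mo (p : ℝ) (r n : ℕ) : ℝ :=
  ∑ m ∈ Finset.Icc 1 n, (∏ i ∈ Finset.range r, ((m : ℝ) - i)) * PD p n m

noncomputable def Ff (p : ℝ) (r n : ℕ) : ℝ :=
  (r.factorial : ℝ) * ∑ j ∈ Finset.range r,
    (Nat.choose (r - 1) j : ℝ) * (-1 : ℝ) ^ (r - 1 - j) *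
      gchoose ((n : ℝ) + p * (j + 1) - 1) (n - 1)

lemma Mo_range (p : ℝ) (r n : ℕ) :
    Mo p r n = ∑ m ∈ Finset.range (n+1), (∏ i ∈ Finset.range r, ((m : ℝ) - i)) * PD p n m := by
  rw [Mo]
  apply Finset.sum_subset
  · intro m hm
    simp only [Finset.mem_Icc] at hm
    simp only [Finset.mem_range]
    omega
  · intro m hmem hnot
    simp only [Finset.mem_range] at hmem
    simp only [Finset.mem_Icc] at hnot
    have : m = 0 := by omega
    subst this
    rw [PD_zero, mul_zero]

lemma w_id (s : ℕ) (x np p : ℝ) :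
    (∏ i ∈ Finset.range (s+1), (x - (i:ℕ))) * (np - p*x)
      + (∏ i ∈ Finset.range (s+1), (x + 1 - (i:ℕ))) * (p*x)
    = (np + p*((s:ℝ)+1)) * (∏ i ∈ Finset.range (s+1), (x - (i:ℕ)))
      + p*((s:ℝ)+1)*(s:ℝ) * (∏ i ∈ Finset.range s, (x - (i:ℕ))) := by
  have h1 : ∏ i ∈ Finset.range (s+1), (x + 1 - (i:ℕ)) = (∏ i ∈ Finset.range s, (x - (i:ℕ))) * (x+1) := by
    rw [Finset.prod_range_succ']
    congr 1
    · apply Finset.prod_congr rfl; intro i _; push_cast; ring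
    · norm_num
  rw [h1, Finset.prod_range_succ]
  ring

lemma Mo_rec (p : ℝ) (s t : ℕ) :
    ((t:ℝ)+1) * Mo p (s+1) (t+2)
      = (((t:ℝ)+1) + p*((s:ℝ)+1)) * Mo p (s+1) (t+1) + p*((s:ℝ)+1)*(s:ℝ) * Mo p s (t+1) := by
  rw [Mo_range p (s+1) (t+2), Mo_range p (s+1) (t+1), Mo_range p s (t+1)]
  have hS1 : ∑ m ∈ Finset.range (t+3),
        (∏ i ∈ Finset.range (s+1), ((m:ℝ) - i)) * ((((t:ℝ)+1) - p*m) * PD p (t+1) m)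
      = ∑ m ∈ Finset.range (t+2),
        (∏ i ∈ Finset.range (s+1), ((m:ℝ) - i)) * ((((t:ℝ)+1) - p*m) * PD p (t+1) m) := by
    rw [show t+3 = (t+2)+1 by omega, Finset.sum_range_succ, PD_vanish]
    simp
  have hS2 : ∑ m ∈ Finset.range (t+3),
        (∏ i ∈ Finset.range (s+1), ((m:ℝ) - i)) * (p*((m:ℝ)-1) * PD p (t+1) (m-1))
      = ∑ m ∈ Finset.range (t+2),
        (∏ i ∈ Finset.range (s+1), ((m:ℝ)+1 - i)) * (p*(m:ℝ) * PD p (t+1) m) := by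
    rw [show t+3 = (t+2)+1 by omega, Finset.sum_range_succ']
    have h0 : (∏ i ∈ Finset.range (s+1), (((0:ℕ):ℝ) - i)) * (p*(((0:ℕ):ℝ)-1) * PD p (t+1) (0-1)) = 0 := by
      rw [show (0:ℕ)-1 = 0 by omega, PD_zero]
      ring
    rw [h0, add_zero]
    apply Finset.sum_congr rfl
    intro m _
    rw [show m+1-1 = m by omega]
    push_cast
    ring
  calc ((t:ℝ)+1) * ∑ m ∈ Finset.range (t+2+1), (∏ i ∈ Finset.range (s+1), ((m:ℝ) - i)) * PD p (t+2) m
      = ∑ m ∈ Finset.range (t+3), ((t:ℝ)+1) * ((∏ i ∈ Finset.range (s+1), ((m:ℝ) - i)) * PD p (t+2) m) := by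
        rw [Finset.mul_sum]
    _ = ∑ m ∈ Finset.range (t+3),
          ((∏ i ∈ Finset.range (s+1), ((m:ℝ) - i)) * ((((t:ℝ)+1) - p*m) * PD p (t+1) m)
            + (∏ i ∈ Finset.range (s+1), ((m:ℝ) - i)) * (p*((m:ℝ)-1) * PD p (t+1) (m-1))) := by
        apply Finset.sum_congr rfl
        intro m _
        have hrec := PD_rec p t m
        calc ((t:ℝ)+1) * ((∏ i ∈ Finset.range (s+1), ((m:ℝ) - i)) * PD p (t+2) m)
            = (∏ i ∈ Finset.range (s+1), ((m:ℝ) - i)) * (((t:ℝ)+1) * PD p (t+2) m) := by ring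
          _ = (∏ i ∈ Finset.range (s+1), ((m:ℝ) - i))
                * ((((t:ℝ)+1) - p*m) * PD p (t+1) m + p*((m:ℝ)-1) * PD p (t+1) (m-1)) := by rw [hrec]
          _ = _ := by ring
    _ = (∑ m ∈ Finset.range (t+3),
          (∏ i ∈ Finset.range (s+1), ((m:ℝ) - i)) * ((((t:ℝ)+1) - p*m) * PD p (t+1) m))
        + ∑ m ∈ Finset.range (t+3),
          (∏ i ∈ Finset.range (s+1), ((m:ℝ) - i)) * (p*((m:ℝ)-1) * PD p (t+1) (m-1)) := by
        rw [Finset.sum_add_distrib]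
    _ = ∑ m ∈ Finset.range (t+2),
          ((∏ i ∈ Finset.range (s+1), ((m:ℝ) - i)) * ((((t:ℝ)+1) - p*m) * PD p (t+1) m)
            + (∏ i ∈ Finset.range (s+1), ((m:ℝ)+1 - i)) * (p*(m:ℝ) * PD p (t+1) m)) := by
        rw [hS1, hS2, Finset.sum_add_distrib]
    _ = ∑ m ∈ Finset.range (t+2),
          ((((t:ℝ)+1) + p*((s:ℝ)+1)) * ((∏ i ∈ Finset.range (s+1), ((m:ℝ) - i)) * PD p (t+1) m)
            + p*((s:ℝ)+1)*(s:ℝ) * ((∏ i ∈ Finset.range s, ((m:ℝ) - i)) * PD p (t+1) m)) := by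
        apply Finset.sum_congr rfl
        intro m _
        linear_combination (PD p (t+1) m) * w_id s (m:ℝ) ((t:ℝ)+1) p
    _ = _ := by
        rw [Finset.sum_add_distrib, Finset.mul_sum, Finset.mul_sum]

lemma Ff_zero (p : ℝ) (N : ℕ) : Ff p 0 N = 0 := by simp [Ff]

lemma Ff_eq (p : ℝ) (s N : ℕ) :
    Ff p (s+1) (N+1) = ((s+1).factorial : ℝ) * ∑ j ∈ Finset.range (s+1),
      (Nat.choose s j : ℝ) * (-1:ℝ)^(s-j) * gchoose (((N:ℝ)+1) + p*((j:ℝ)+1) - 1) N := by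
  simp only [Ff, Nat.add_sub_cancel]
  congr 1
  apply Finset.sum_congr rfl
  intro j _
  push_cast
  ring_nf

lemma Ff_rec (p : ℝ) (s t : ℕ) :
    ((t:ℝ)+1) * Ff p (s+1) (t+2)
      = (((t:ℝ)+1) + p*((s:ℝ)+1)) * Ff p (s+1) (t+1) + p*((s:ℝ)+1)*(s:ℝ) * Ff p s (t+1) := by
  have hfac : (((s+1).factorial : ℕ) : ℝ) = ((s:ℝ)+1) * (s.factorial : ℝ) := by
    rw [Nat.factorial_succ]; push_cast; ring
  rw [show t+2 = (t+1)+1 by omega, Ff_eq p s (t+1), Ff_eq p s t]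
  -- third term : unfold Ff at s
  have hFs : Ff p s (t+1) = (s.factorial : ℝ) * ∑ j ∈ Finset.range s,
      (Nat.choose (s-1) j : ℝ) * (-1:ℝ)^(s-1-j) * gchoose (((t:ℝ)+1) + p*((j:ℝ)+1) - 1) t := by
    simp only [Ff, Nat.add_sub_cancel]
    congr 1
    apply Finset.sum_congr rfl
    intro j _
    push_cast
    ring_nf
  have htop : p*((s:ℝ)+1)*(s:ℝ) * ((s.factorial : ℝ) *
      ((Nat.choose (s-1) s : ℝ) * (-1:ℝ)^(s-1-s) * gchoose (((t:ℝ)+1) + p*((s:ℝ)+1) - 1) t)) = 0 := by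
    cases s with
    | zero => push_cast; ring
    | succ u =>
      rw [Nat.choose_eq_zero_of_lt (by omega : (u+1)-1 < u+1)]
      push_cast; ring
  have h3 : p*((s:ℝ)+1)*(s:ℝ) * Ff p s (t+1)
      = ∑ j ∈ Finset.range (s+1), p*((s:ℝ)+1)*(s:ℝ) * ((s.factorial : ℝ) *
          ((Nat.choose (s-1) j : ℝ) * (-1:ℝ)^(s-1-j) * gchoose (((t:ℝ)+1) + p*((j:ℝ)+1) - 1) t)) := by
    rw [Finset.sum_range_succ, htop, add_zero, hFs, Finset.mul_sum, Finset.mul_sum]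
  rw [h3, Finset.mul_sum, Finset.mul_sum, Finset.mul_sum, Finset.mul_sum, ← Finset.sum_add_distrib]
  apply Finset.sum_congr rfl
  intro j hj
  simp only [Finset.mem_range] at hj
  have hgch : gchoose ((((t:ℝ)+1)+1) + p*((j:ℝ)+1) - 1) (t+1) * ((t:ℝ)+1)
      = gchoose (((t:ℝ)+1) + p*((j:ℝ)+1) - 1) t * (((t:ℝ) + p*((j:ℝ)+1) - 1) + 1 + 1) := by
    have e1 : (((t:ℝ)+1)+1) + p*((j:ℝ)+1) - 1 = ((t:ℝ) + p*((j:ℝ)+1) - 1 + 1) + 1 := by ring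
    have e2 : ((t:ℝ)+1) + p*((j:ℝ)+1) - 1 = ((t:ℝ) + p*((j:ℝ)+1) - 1) + 1 := by ring
    rw [e1, e2]
    have := gchoose_succ' ((t:ℝ) + p*((j:ℝ)+1) - 1 + 1) t
    push_cast at this ⊢
    linarith [this]
  rw [hfac]
  push_cast
  rcases Nat.lt_or_ge j s with hjs | hjs
  · have hsgn : (-1:ℝ)^(s-j) = -(-1:ℝ)^(s-1-j) := by
      rw [show s-j = (s-1-j)+1 by omega, pow_succ]; ring
    rw [hsgn]
    have hid := real_id s j
    linear_combination (-( ((s:ℝ)+1) * (s.factorial : ℝ) * (Nat.choose s j : ℝ)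
        * (-1:ℝ)^(s-1-j) )) * hgch
      + ((-1:ℝ)^(s-1-j) * gchoose (((t:ℝ)+1) + p*((j:ℝ)+1) - 1) t * p * ((s:ℝ)+1)
        * (s.factorial : ℝ)) * hid
  · have hjs' : j = s := by omega
    subst hjs'
    have htop2 : p*((j:ℝ)+1)*(j:ℝ) * ((Nat.choose (j-1) j : ℝ) * (-1:ℝ)^(j-1-j)) = 0 := by
      cases j with
      | zero => push_cast; ring
      | succ u =>
        rw [Nat.choose_eq_zero_of_lt (by omega : (u+1)-1 < u+1)]
        push_cast; ring
    rw [Nat.sub_self]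
    linear_combination (((j:ℝ)+1) * (j.factorial : ℝ) * (Nat.choose j j : ℝ) * (-1:ℝ)^0) * hgch
      - ((j.factorial : ℝ) * gchoose (((t:ℝ)+1) + p*((j:ℝ)+1) - 1) t) * htop2

lemma moment_eq (p : ℝ) : ∀ n : ℕ, 1 ≤ n → ∀ r : ℕ, 1 ≤ r → Mo p r n = Ff p r n := by
  intro n hn
  induction n, hn using Nat.le_induction with
  | base =>
    intro r hr
    obtain ⟨s, rfl⟩ : ∃ s, r = s+1 := ⟨r-1, by omega⟩
    have hPD : PD p 1 1 = 1 := by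
      have h := PD_eq p 0 1
      simpa [gchoose_zero] using h
    have hMo : Mo p (s+1) 1 = ∏ i ∈ Finset.range (s+1), ((1:ℝ) - i) := by
      rw [Mo, Finset.Icc_self, Finset.sum_singleton, hPD, mul_one, Nat.cast_one]
    have hFf : Ff p (s+1) 1 = ((s+1).factorial : ℝ) * ∑ j ∈ Finset.range (s+1),
        (Nat.choose s j : ℝ) * (-1:ℝ)^(s-j) := by
      have h := Ff_eq p s 0
      simpa [gchoose_zero] using h
    cases s with
    | zero => rw [hMo, hFf]; simp
    | succ u =>
      rw [hMo, hFf]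
      have h1 : (∏ i ∈ Finset.range (u+1+1), ((1:ℝ) - i)) = 0 := by
        apply Finset.prod_eq_zero (Finset.mem_range.mpr (by omega : 1 < u+1+1))
        norm_num
      have h2 : ∑ j ∈ Finset.range (u+1+1), ((u+1).choose j : ℝ) * (-1:ℝ)^(u+1-j) = 0 := by
        have hap := add_pow (1:ℝ) (-1) (u+1)
        simp only [one_pow, one_mul] at hap
        have hz : ((1:ℝ) + -1)^(u+1) = 0 := by norm_num
        rw [hz] at hap
        calc ∑ j ∈ Finset.range (u+1+1), ((u+1).choose j : ℝ) * (-1:ℝ)^(u+1-j)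
            = ∑ j ∈ Finset.range (u+1+1), (-1:ℝ)^(u+1-j) * ((u+1).choose j : ℝ) := by
              apply Finset.sum_congr rfl; intro j _; ring
          _ = 0 := hap.symm
      rw [h1, h2]
      ring
  | succ n hn ih =>
    intro r hr
    obtain ⟨t, rfl⟩ : ∃ t, n = t+1 := ⟨n-1, by omega⟩
    obtain ⟨s, rfl⟩ : ∃ s, r = s+1 := ⟨r-1, by omega⟩
    have hMrec := Mo_rec p s t
    have hFrec := Ff_rec p s t
    have hs : (s:ℝ) * Mo p s (t+1) = (s:ℝ) * Ff p s (t+1) := by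
      cases s with
      | zero => simp
      | succ u => rw [ih (u+1) (by omega)]
    have hr1 : Mo p (s+1) (t+1) = Ff p (s+1) (t+1) := ih (s+1) (by omega)
    have hpos : ((t:ℝ)+1) ≠ 0 := by positivity
    have hkey : ((t:ℝ)+1) * Mo p (s+1) (t+2) = ((t:ℝ)+1) * Ff p (s+1) (t+2) := by
      rw [hMrec, hFrec, hr1]
      linear_combination (p*((s:ℝ)+1)) * hs
    have := mul_left_cancel₀ hpos hkey
    exact this

lemma gchoose_tendsto (q : ℝ) (hq : 0 < q) :
    Tendsto (fun n : ℕ => gchoose ((n:ℝ) + q - 1) (n-1) / (n:ℝ)^q) atTop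
      (𝓝 (1 / Real.Gamma (q+1))) := by
  rw [← tendsto_add_atTop_iff_nat 1]
  have h1 : Tendsto (fun m : ℕ => ((m:ℝ)/((m:ℝ)+1))^q / (q * Real.GammaSeq q m)) atTop
      (𝓝 (1 / Real.Gamma (q+1))) := by
    have hb : Tendsto (fun m : ℕ => (m:ℝ)/((m:ℝ)+1)) atTop (𝓝 1) := by
      simpa using tendsto_natCast_div_add_atTop (1:ℝ)
    have hc : ContinuousAt (fun x : ℝ => x ^ q) 1 :=
      Real.continuousAt_rpow_const 1 q (Or.inl one_ne_zero)
    have ha : Tendsto (fun m : ℕ => ((m:ℝ)/((m:ℝ)+1))^q) atTop (𝓝 1) := by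
      have := hc.tendsto.comp hb
      simpa [Function.comp_def, Real.one_rpow] using this
    have hgam : Tendsto (fun m : ℕ => q * Real.GammaSeq q m) atTop (𝓝 (Real.Gamma (q+1))) := by
      rw [Real.Gamma_add_one hq.ne']
      exact (Real.GammaSeq_tendsto_Gamma q).const_mul q
    have hne : Real.Gamma (q+1) ≠ 0 := (Real.Gamma_pos_of_pos (by linarith)).ne'
    simpa [Pi.div_def] using ha.div hgam hne
  apply Tendsto.congr' _ h1
  filter_upwards [eventually_ge_atTop 1] with m hm
  have hm' : (0:ℝ) < (m:ℝ) := by exact_mod_cast hm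
  have hprod : (0:ℝ) < ∏ i ∈ Finset.range m, (q + 1 + (i:ℝ)) := by
    apply Finset.prod_pos
    intro i _
    positivity
  have hGS : Real.GammaSeq q m
      = (m:ℝ)^q * (m.factorial : ℝ) / (q * ∏ i ∈ Finset.range m, (q + 1 + (i:ℝ))) := by
    rw [Real.GammaSeq]
    congr 1
    rw [Finset.prod_range_succ']
    have hpc : ∀ i ∈ Finset.range m, (q + ((i+1 : ℕ):ℝ)) = (q + 1 + (i:ℝ)) := by
      intro i _; push_cast; ring
    rw [Finset.prod_congr rfl hpc]
    push_cast
    ring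
  have hgc : gchoose (((m+1:ℕ):ℝ) + q - 1) ((m+1)-1)
      = (∏ i ∈ Finset.range m, (q + 1 + (i:ℝ))) / (m.factorial : ℝ) := by
    rw [show (m+1)-1 = m by omega, gchoose]
    congr 1
    rw [← Finset.prod_range_reflect (fun j : ℕ => (((m+1:ℕ):ℝ) + q - 1) - (j:ℝ)) m]
    apply Finset.prod_congr rfl
    intro i hi
    simp only [Finset.mem_range] at hi
    have hcast : ((m - 1 - i : ℕ):ℝ) = (m:ℝ) - 1 - (i:ℝ) := by
      have : m - 1 - i = m - (i+1) := by omega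
      rw [this, Nat.cast_sub (by omega)]
      push_cast; ring
    simp only [hcast]
    push_cast
    ring
  have hfac : ((m.factorial : ℕ):ℝ) ≠ 0 := Nat.cast_ne_zero.mpr (Nat.factorial_ne_zero m)
  have hrp1 : (0:ℝ) < ((m:ℝ))^q := Real.rpow_pos_of_pos hm' q
  have hrp2 : (0:ℝ) < ((m:ℝ)+1)^q := Real.rpow_pos_of_pos (by linarith) q
  rw [hGS, hgc, Real.div_rpow (le_of_lt hm') (by linarith : (0:ℝ) ≤ (m:ℝ)+1)]
  push_cast
  field_simp
/-- The `r`-th factorial moment of the source degree `D_n` in the Bernoulli model: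
exact formula and asymptotics `~ r! n^{rp} / Γ(rp+1)`. -/
theorem stmt2 (p : ℝ) (hp0 : 0 < p) (hp1 : p < 1) (r : ℕ) (hr : 1 ≤ r) :
    (∀ n : ℕ, 1 ≤ n →
      (∑ m ∈ Finset.Icc 1 n, (∏ i ∈ Finset.range r, ((m : ℝ) - i)) * PD p n m) =
        (r.factorial : ℝ) * ∑ j ∈ Finset.range r,
          (Nat.choose (r - 1) j : ℝ) * (-1 : ℝ) ^ (r - 1 - j) *
            gchoose ((n : ℝ) + p * (j + 1) - 1) (n - 1)) ∧
    Tendsto (fun n : ℕ =>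
        (∑ m ∈ Finset.Icc 1 n, (∏ i ∈ Finset.range r, ((m : ℝ) - i)) * PD p n m) /
          (n : ℝ) ^ ((r : ℝ) * p))
      atTop (𝓝 ((r.factorial : ℝ) / Real.Gamma ((r : ℝ) * p + 1))) := by

  have part1 : ∀ n : ℕ, 1 ≤ n →
      (∑ m ∈ Finset.Icc 1 n, (∏ i ∈ Finset.range r, ((m : ℝ) - i)) * PD p n m) =
        (r.factorial : ℝ) * ∑ j ∈ Finset.range r,
          (Nat.choose (r - 1) j : ℝ) * (-1 : ℝ) ^ (r - 1 - j) *
            gchoose ((n : ℝ) + p * (j + 1) - 1) (n - 1) := by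
    intro n hn
    have := moment_eq p n hn r hr
    simpa [Mo, Ff] using this
  refine ⟨part1, ?_⟩
  have hrpos : (0:ℝ) < (r:ℝ) := by exact_mod_cast hr
  have hlim : ∀ j ∈ Finset.range r, Tendsto (fun n : ℕ =>
      gchoose ((n:ℝ) + p*((j:ℝ)+1) - 1) (n-1) / (n:ℝ)^((r:ℝ)*p)) atTop
      (𝓝 (if j = r-1 then 1/Real.Gamma ((r:ℝ)*p+1) else 0)) := by
    intro j hj
    simp only [Finset.mem_range] at hj
    rcases eq_or_ne j (r-1) with hj' | hj'
    · rw [if_pos hj']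
      have e : p*((j:ℝ)+1) = (r:ℝ)*p := by
        subst hj'
        rw [Nat.cast_sub hr]
        push_cast; ring
      simp only [e]
      exact gchoose_tendsto ((r:ℝ)*p) (mul_pos hrpos hp0)
    · rw [if_neg hj']
      have hqpos : 0 < p*((j:ℝ)+1) := by positivity
      have hδ : 0 < (r:ℝ)*p - p*((j:ℝ)+1) := by
        have hj2 : (j:ℝ) + 1 < (r:ℝ) := by
          have hh : j + 1 < r := by omega
          exact_mod_cast hh
        nlinarith
      have h0 : Tendsto (fun n : ℕ => (n:ℝ)^(p*((j:ℝ)+1) - (r:ℝ)*p)) atTop (𝓝 0) := by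
        have hcomp := (tendsto_rpow_neg_atTop hδ).comp tendsto_natCast_atTop_atTop
        simp only [Function.comp_def] at hcomp
        rw [show p*((j:ℝ)+1) - (r:ℝ)*p = -((r:ℝ)*p - p*((j:ℝ)+1)) by ring]
        exact hcomp
      have hK := gchoose_tendsto (p*((j:ℝ)+1)) hqpos
      have hmul := hK.mul h0
      rw [mul_zero] at hmul
      apply Tendsto.congr' _ hmul
      filter_upwards [eventually_ge_atTop 1] with n hn
      have hn' : (0:ℝ) < (n:ℝ) := by exact_mod_cast hn
      rw [Real.rpow_sub hn']
      have hne1 : ((n:ℝ))^(p*((j:ℝ)+1)) ≠ 0 := (Real.rpow_pos_of_pos hn' _).ne'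
      have hne2 : ((n:ℝ))^((r:ℝ)*p) ≠ 0 := (Real.rpow_pos_of_pos hn' _).ne'
      field_simp
  have hsum := tendsto_finset_sum (Finset.range r) (fun j hj =>
    ((hlim j hj).const_mul ((r.factorial:ℝ) * ((Nat.choose (r-1) j : ℝ) * (-1:ℝ)^(r-1-j)))))
  have hval : ∑ j ∈ Finset.range r,
      (r.factorial:ℝ) * ((Nat.choose (r-1) j : ℝ) * (-1:ℝ)^(r-1-j))
        * (if j = r-1 then 1/Real.Gamma ((r:ℝ)*p+1) else 0)
      = (r.factorial : ℝ) / Real.Gamma ((r : ℝ) * p + 1) := by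
    have hpt : ∀ j ∈ Finset.range r,
        (r.factorial:ℝ) * ((Nat.choose (r-1) j : ℝ) * (-1:ℝ)^(r-1-j))
          * (if j = r-1 then 1/Real.Gamma ((r:ℝ)*p+1) else 0)
        = if j = r-1 then (r.factorial : ℝ) / Real.Gamma ((r : ℝ) * p + 1) else 0 := by
      intro j _
      split_ifs with h
      · rw [h, Nat.sub_self, Nat.choose_self, pow_zero]
        push_cast
        ring
      · rw [mul_zero]
    rw [Finset.sum_congr rfl hpt, Finset.sum_ite_eq' (Finset.range r) (r-1)
      (fun _ => (r.factorial : ℝ) / Real.Gamma ((r : ℝ) * p + 1)),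
      if_pos (Finset.mem_range.mpr (by omega : r - 1 < r))]
  rw [hval] at hsum
  apply Tendsto.congr' _ hsum
  filter_upwards [eventually_ge_atTop 1] with n hn
  rw [part1 n hn, Finset.mul_sum, Finset.sum_div]
  apply Finset.sum_congr rfl
  intro j _
  ring
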